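/- arXiv:2112.08043 — 3 statements merged into one kernel-verified Lean document; each statement's English description precedes it below -/
import Mathlib

section
/- Let A be a finite set. In the category T(A) of finite rooted trees with leaf set A, for any two objects S and T there exists a morphism S → T if and only if S can be obtained from T by contracting a set of inner edges of T, and in that case the morphism is unique. Consequently T(A) is a partially ordered set. -/
open CategoryTheory Opposite

noncomputable section

/-- The poset of partitions of `A` (as setoids) strictly finer than the
indiscrete partition `⊤` and strictly coarser than the discrete partition `⊥`,
ordered by refinement (the coarser partition being the smaller one). -/
def PartitionPoset (A : Type) : Type := { r : Setoid A // r ≠ ⊥ ∧ r ≠ ⊤ }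

instance (A : Type) : PartialOrder (PartitionPoset A) :=
  PartialOrder.lift (fun P => OrderDual.toDual P.1)
    (fun _ _ h => Subtype.ext (OrderDual.toDual.injective h))

/-- The partition complex of `A`: the nerve of the poset of nontrivial partitions. -/
abbrev partitionComplex (A : Type) : SSet.{0} := nerve (PartitionPoset A)

/-- The blocks of a partition. -/
def PartitionPoset.blocks {A : Type} (P : PartitionPoset A) : Set (Set A) := P.1.classes

theorem PartitionPoset.le_iff {A : Type} {P Q : PartitionPoset A} :
    P ≤ Q ↔ Q.1 ≤ P.1 := Iff.rfl

/-- A finite rooted tree with set of leaves `A` and no unary vertices, encoded by its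
set of edges, each edge being recorded as the set of leaves lying above it: this family
of sets contains `A` itself (the root edge) and all singletons (the leaf edges), and is
laminar (any two members are nested or disjoint). Vertices correspond to the
non-singleton members, and automatically have at least two incoming edges. -/
structure TreeOn (A : Type) : Type where
  edges : Set (Set A)
  univ_mem : Set.univ ∈ edges
  singleton_mem : ∀ a : A, {a} ∈ edges
  nonempty_of_mem : ∀ e ∈ edges, e.Nonempty
  laminar : ∀ e ∈ edges, ∀ f ∈ edges, e ⊆ f ∨ f ⊆ e ∨ e ∩ f = ∅

namespace TreeOn

variable {A : Type}

@[ext] theorem ext {S T : TreeOn A} (h : S.edges = T.edges) : S = T := by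
  cases S; cases T; congr

/-- `S ≤ T` iff `S` is obtained from `T` by contracting a set of inner edges. -/
instance : PartialOrder (TreeOn A) where
  le S T := S.edges ⊆ T.edges
  le_refl S := subset_rfl
  le_trans S T U h h' := Set.Subset.trans h h'
  le_antisymm S T h h' := ext (Set.Subset.antisymm h h')

/-- An inner edge: an edge which is neither the root edge nor a leaf. -/
def IsInnerEdge (T : TreeOn A) (e : Set A) : Prop :=
  e ∈ T.edges ∧ e ≠ Set.univ ∧ ∀ a : A, e ≠ {a}

/-- The vertices of a tree: they correspond to the non-singleton edges (each such edge
has a vertex on top of it). -/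
def vertices (T : TreeOn A) : Set (Set A) := { e ∈ T.edges | ∀ a : A, e ≠ {a} }

/-- A leaf vertex: a vertex all of whose incoming edges are leaves, i.e. a non-singleton
edge all of whose proper subedges are singletons. -/
def IsLeafVertex (T : TreeOn A) (e : Set A) : Prop :=
  e ∈ T.vertices ∧ ∀ f ∈ T.edges, f ⊆ e → f ≠ e → ∃ a : A, f = {a}

/-- The corolla: the tree with no inner edges. -/
def corolla (A : Type) [Nonempty A] : TreeOn A where
  edges := {Set.univ} ∪ { s | ∃ a : A, s = {a} }
  univ_mem := Or.inl rfl
  singleton_mem a := Or.inr ⟨a, rfl⟩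
  nonempty_of_mem e he := by
    rcases he with h | ⟨a, rfl⟩
    · simp only [Set.mem_singleton_iff] at h; subst h; exact Set.univ_nonempty
    · exact ⟨a, rfl⟩
  laminar e he f hf := by
    rcases hf with h | ⟨a, rfl⟩
    · simp only [Set.mem_singleton_iff] at h; subst h; exact Or.inl (Set.subset_univ e)
    · by_cases ha : a ∈ e
      · exact Or.inr (Or.inl (by simpa using ha))
      · exact Or.inr (Or.inr (by ext x; simp; rintro hx rfl; exact ha hx))

end TreeOn

/-- The category `T⁺(A)` of trees with leaf set `A` having at least one inner edge;
it is a poset under the contraction order. -/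
def TreePlus (A : Type) : Type := { T : TreeOn A // ∃ e, T.IsInnerEdge e }

instance (A : Type) : PartialOrder (TreePlus A) := Subtype.partialOrder _

/-- A morphism of trees `S ⟶ T` in the category `T(A)`: a map sending each edge of `S`
to an edge of `T` lying over the same set of leaves (hence preserving the root edge and
inducing the identity on leaves). These are exactly the composites of the face maps
creating an inner edge. -/
def TreeHom {A : Type} (S T : TreeOn A) : Type :=
  { f : { e : Set A // e ∈ S.edges } → { e : Set A // e ∈ T.edges } // ∀ e, (f e).1 = e.1 }

theorem treeHom_nonempty_iff_subset {A : Type} (S T : TreeOn A) :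
    Nonempty (TreeHom S T) ↔ S.edges ⊆ T.edges := by
  constructor
  · rintro ⟨f, hf⟩ e he
    have := (f ⟨e, he⟩).2
    rwa [hf ⟨e, he⟩] at this
  · intro h
    exact ⟨⟨fun e => ⟨e.1, h e.2⟩, fun e => rfl⟩⟩

/-- In the category `T(A)` of finite rooted trees with leaf set `A`, there exists a
morphism `S ⟶ T` if and only if `S` can be obtained from `T` by contracting a set of
inner edges of `T`, and in that case the morphism is unique; consequently `T(A)` is a
partially ordered set (its hom-sets are subsingletons and morphisms in both directions
force equality). -/
theorem treeHom_iff_contraction (A : Type) [Fintype A] (S T : TreeOn A) :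
    (Nonempty (TreeHom S T) ↔
      ∃ E : Set (Set A), (∀ e ∈ E, T.IsInnerEdge e) ∧ S.edges = T.edges \ E) ∧
    Subsingleton (TreeHom S T) ∧
    (Nonempty (TreeHom S T) → Nonempty (TreeHom T S) → S = T) := by
  refine ⟨?_, ?_, ?_⟩
  · rw [treeHom_nonempty_iff_subset]
    constructor
    · intro h
      refine ⟨T.edges \ S.edges, ?_, ?_⟩
      · rintro e ⟨heT, heS⟩
        refine ⟨heT, ?_, ?_⟩
        · rintro rfl; exact heS S.univ_mem
        · rintro a rfl; exact heS (S.singleton_mem a)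
      · ext e
        constructor
        · intro he; exact ⟨h he, fun h' => h'.2 he⟩
        · rintro ⟨heT, he⟩
          by_contra hc
          exact he ⟨heT, hc⟩
    · rintro ⟨E, _, hE⟩
      rw [hE]
      exact Set.diff_subset
  · constructor
    rintro ⟨f, hf⟩ ⟨g, hg⟩
    apply Subtype.ext
    funext e
    exact Subtype.ext ((hf e).trans (hg e).symm)
  · rw [treeHom_nonempty_iff_subset, treeHom_nonempty_iff_subset]
    intro h h'
    exact TreeOn.ext (Set.Subset.antisymm h h')

end
end

section
/- Let A be a finite set. Every nondegenerate simplex of the partition complex NP(A), i.e. every strictly increasing chain P₀ < ⋯ < P_p of partitions of A strictly between the indiscrete and the discrete partition, is a face of an elementary simplex: it can be extended to a strictly increasing chain Q₀ < ⋯ < Q_q containing the P_i as a subchain, such that the indiscrete partition refines to Q₀ at a single vertex and for each 0 ≤ i < q exactly one block of Q_i is subdivided in passing to Q_{i+1}. -/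
open CategoryTheory Opposite

noncomputable section

/-!
If `t` is strictly finer than `s`, pick a pair `s a b` with `¬ t a b` and refine `s` by `t`
only inside the `s`-class of `a`: the result lies between `t` and `s` and splits exactly one
block of `s`. So in the finite poset of nontrivial partitions every covering step splits exactly
one block, and it suffices to refine the given chain to a chain of covering steps
(`LTSeries.exists_relSeries_covBy`). The indiscrete partition has the single block `A`, which
every nontrivial partition splits.
-/

namespace Setoid

variable {A : Type*}

instance [Finite A] : Finite (Setoid A) :=
  Finite.of_injective (fun r : Setoid A => ⇑r) fun _ _ h =>
    Setoid.ext fun a b => iff_of_eq (congrFun (congrFun h a) b)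

def refineClass (s t : Setoid A) (a : A) : Setoid A where
  r x y := s x y ∧ (s a x → t x y)
  iseqv :=
    ⟨fun x => ⟨s.refl x, fun _ => t.refl x⟩,
      fun hxy => ⟨s.symm hxy.1, fun hay => t.symm (hxy.2 (s.trans hay (s.symm hxy.1)))⟩,
      fun hxy hyz =>
        ⟨s.trans hxy.1 hyz.1, fun hax => t.trans (hxy.2 hax) (hyz.2 (s.trans hax hxy.1))⟩⟩

theorem refineClass_le (s t : Setoid A) (a : A) : refineClass s t a ≤ s := fun _ _ h => h.1

theorem le_refineClass {s t : Setoid A} (hts : t ≤ s) (a : A) : t ≤ refineClass s t a :=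
  fun _ _ h => ⟨hts h, fun _ => h⟩

theorem class_not_mem_classes_refineClass {s t : Setoid A} {a b : A} (hab : s a b)
    (hnt : ¬ t a b) : {x | s x a} ∉ (refineClass s t a).classes := by
  rintro ⟨z, hz⟩
  have hrel : ∀ {x}, s x a → refineClass s t a x z := fun {x} hx => by
    have hx' : x ∈ {x | s x a} := hx
    rwa [hz] at hx'
  exact hnt (t.trans ((hrel (s.refl a)).2 (s.refl a)) (t.symm ((hrel (s.symm hab)).2 hab)))

theorem eq_class_of_not_mem_classes_refineClass {s t : Setoid A} {a : A} {c : Set A}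
    (hc : c ∈ s.classes) (hc' : c ∉ (refineClass s t a).classes) : c = {x | s x a} := by
  obtain ⟨z, rfl⟩ := hc
  by_cases haz : s a z
  · ext x
    exact ⟨fun hxz => s.trans hxz (s.symm haz), fun hxa => s.trans hxa haz⟩
  · refine absurd ⟨z, ?_⟩ hc'
    ext x
    exact ⟨fun hxz => ⟨hxz, fun hax => absurd (s.trans hax hxz) haz⟩, fun h => h.1⟩

theorem exists_splitting_one_class {s t : Setoid A} (h : t < s) :
    ∃ m, t ≤ m ∧ m < s ∧ ∃! c, c ∈ s.classes ∧ c ∉ m.classes := by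
  obtain ⟨a, b, hab, hnt⟩ : ∃ a b, s a b ∧ ¬ t a b := by
    by_contra! H
    exact h.not_ge fun a b => H a b
  have hsplit := class_not_mem_classes_refineClass hab hnt
  refine ⟨refineClass s t a, le_refineClass h.le a, (refineClass_le s t a).lt_of_ne ?_,
    {x | s x a}, ⟨s.mem_classes a, hsplit⟩,
    fun c hc => eq_class_of_not_mem_classes_refineClass hc.1 hc.2⟩
  rintro heq
  rw [heq] at hsplit
  exact hsplit (s.mem_classes a)

end Setoid

namespace PartitionPoset

variable {A : Type}

instance [Finite A] : Finite (PartitionPoset A) :=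
  inferInstanceAs (Finite {r : Setoid A // r ≠ ⊥ ∧ r ≠ ⊤})

theorem existsUnique_split_of_covBy {P Q : PartitionPoset A} (h : P ⋖ Q) :
    ∃! c, c ∈ P.1.classes ∧ c ∉ Q.1.classes := by
  obtain ⟨m, hQm, hmP, hsplit⟩ := Setoid.exists_splitting_one_class (show Q.1 < P.1 from h.lt)
  let M : PartitionPoset A :=
    ⟨m, fun hm => Q.2.1 (le_bot_iff.1 (hm ▸ hQm)), fun hm => P.2.2 (top_le_iff.1 (hm ▸ hmP.le))⟩
  have hMQ : M = Q := (show M ≤ Q from hQm).eq_of_not_lt (h.2 (show P < M from hmP))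
  exact hMQ ▸ hsplit

theorem existsUnique_split_top (P : PartitionPoset A) :
    ∃! c, c ∈ (⊤ : Setoid A).classes ∧ c ∉ P.1.classes := by
  obtain ⟨a⟩ : Nonempty A := by
    by_contra hA
    rw [not_nonempty_iff] at hA
    exact P.2.1 (Setoid.ext fun a => isEmptyElim a)
  have hclass : ∀ c ∈ (⊤ : Setoid A).classes, c = Set.univ := by
    rintro c ⟨y, rfl⟩
    exact Set.eq_univ_of_forall fun x => trivial
  refine ⟨Set.univ, ⟨hclass _ (Setoid.mem_classes ⊤ a) ▸ Setoid.mem_classes ⊤ a, ?_⟩,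
    fun c hc => hclass c hc.1⟩
  rintro ⟨z, hz⟩
  have hrel : ∀ x, P.1 x z := fun x => hz.subset (Set.mem_univ x)
  exact P.2.2 (Setoid.eq_top_iff.2 fun x y => P.1.trans (hrel x) (P.1.symm (hrel y)))

end PartitionPoset

/-- Every nondegenerate simplex of the partition complex `NP(A)`, i.e. every strictly
increasing chain `P₀ < ⋯ < P_p` of partitions of `A` strictly between the indiscrete
and the discrete partition, is a face of an elementary simplex: it extends to a strictly
increasing chain `Q₀ < ⋯ < Q_q` containing the `Pᵢ` as a subchain, such that the
indiscrete partition refines to `Q₀` at a single vertex (exactly one of its blocks is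
subdivided) and for each `0 ≤ i < q` exactly one block of `Qᵢ` is subdivided in passing
to `Q_{i+1}`. -/
theorem exists_elementary_extension (A : Type) [Fintype A] (p : ℕ)
    (P : Fin (p + 1) → PartitionPoset A) (hP : StrictMono P) :
    ∃ (q : ℕ) (Q : Fin (q + 1) → PartitionPoset A) (ι : Fin (p + 1) → Fin (q + 1)),
      StrictMono Q ∧ StrictMono ι ∧ (∀ i, Q (ι i) = P i) ∧
      (∃! b : Set A, b ∈ (⊤ : Setoid A).classes ∧ b ∉ (Q 0).1.classes) ∧
      (∀ i : Fin q, ∃! b : Set A,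
        b ∈ (Q i.castSucc).1.classes ∧ b ∉ (Q i.succ).1.classes) := by
  obtain ⟨Q, ι, hQι, -, -⟩ := (LTSeries.mk p P hP).exists_relSeries_covBy
  have hQι' : ∀ i : Fin (p + 1), Q (ι i) = P i := congrFun hQι
  have hQ : StrictMono Q := Fin.strictMono_iff_lt_succ.2 fun i => (Q.step i).lt
  refine ⟨Q.length, Q, ι, hQ, fun i j hij => hQ.lt_iff_lt.1 ?_, hQι',
    (Q 0).existsUnique_split_top, fun i => PartitionPoset.existsUnique_split_of_covBy (Q.step i)⟩
  rw [hQι', hQι']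
  exact hP hij
end
end

section
/- Let A be a finite set and T an object of T⁺(A). The elementary layerings of T are in natural bijection with the linear orderings of the set V(T) of vertices of T that are compatible with (i.e., extend) the partial order on V(T) determined by the tree structure, the root being smallest; in particular every elementary layering of T is a simplex of NP(A) of dimension |V(T)| − 2. -/
open CategoryTheory Opposite

noncomputable section

/-- A map in `TopCat` is a homotopy equivalence. -/
def TopCat.IsHomotopyEquivMap {X Y : TopCat} (f : X ⟶ Y) : Prop :=
  ∃ g : Y ⟶ X, ContinuousMap.Homotopic (f ≫ g).hom (TopCat.Hom.hom (𝟙 X)) ∧ ContinuousMap.Homotopic (g ≫ f).hom (TopCat.Hom.hom (𝟙 Y))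

/-- A map of simplicial sets is a weak homotopy equivalence; since geometric realizations
are CW complexes, this is (by Whitehead's theorem) equivalent to the geometric
realization being a homotopy equivalence, which is how we phrase it. -/
def SSet.IsWeakHomotopyEquiv {X Y : SSet.{0}} (f : X ⟶ Y) : Prop :=
  TopCat.IsHomotopyEquivMap (SSet.toTop.map f)

/-- A simplicial set is weakly contractible iff its geometric realization (a CW complex)
is contractible. -/
def SSet.WeaklyContractible (X : SSet.{0}) : Prop :=
  ContractibleSpace (SSet.toTop.obj X)

/-- A functor is homotopy initial if for every object `c` of the target, the comma
category `φ/c` has weakly contractible nerve (classifying space). -/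
def CategoryTheory.Functor.HomotopyInitial {D : Type} [Category.{0} D] {C : Type}
    [Category.{0} C] (φ : D ⥤ C) : Prop :=
  ∀ c : C, SSet.WeaklyContractible (nerve (CostructuredArrow φ c))
section ChainTree

variable {A : Type}

theorem Setoid.exists_of_ne_bot {r : Setoid A} (h : r ≠ ⊥) :
    ∃ x y : A, x ≠ y ∧ r x y := by
  by_contra hc
  push_neg at hc
  refine h (Setoid.ext fun a b => ?_)
  constructor
  · intro hr
    by_contra hne
    exact hc a b hne hr
  · rintro rfl
    exact r.refl' a

theorem Setoid.class_subset_or_disjoint {r s : Setoid A} (h : r ≤ s) {c d : Set A}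
    (hc : c ∈ r.classes) (hd : d ∈ s.classes) : c ⊆ d ∨ c ∩ d = ∅ := by
  obtain ⟨y, rfl⟩ := hc
  obtain ⟨z, rfl⟩ := hd
  by_cases hints : ({ x | r x y } ∩ { x | s x z } : Set A) = ∅
  · exact Or.inr hints
  · left
    obtain ⟨x, hxr, hxs⟩ := Set.nonempty_iff_ne_empty.2 hints
    intro w hw
    have hwx : r w x := r.trans' hw (r.symm' hxr)
    exact s.trans' (h hwx) hxs

/-- The underlying tree of a layered tree, i.e. of a chain of partitions: the functor
`φ` forgetting the layers and deleting unary vertices. Its edges are the root edge, the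
leaf edges and the blocks of the partitions in the chain. -/
def chainTree {n : ℕ} (F : ComposableArrows (PartitionPoset A) n) : TreeOn A where
  edges := {Set.univ} ∪ { s | ∃ a : A, s = {a} } ∪ ⋃ i, (F.obj i).blocks
  univ_mem := Or.inl (Or.inl rfl)
  singleton_mem a := Or.inl (Or.inr ⟨a, rfl⟩)
  nonempty_of_mem e he := by
    rcases he with (h | ⟨a, rfl⟩) | h
    · simp only [Set.mem_singleton_iff] at h
      subst h
      obtain ⟨x, y, -, -⟩ := Setoid.exists_of_ne_bot (F.obj 0).2.1
      exact ⟨x, trivial⟩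
    · exact ⟨a, rfl⟩
    · simp only [Set.mem_iUnion] at h
      obtain ⟨i, hi⟩ := h
      obtain ⟨y, rfl⟩ := hi
      exact ⟨y, (F.obj i).1.refl' y⟩
  laminar e he f hf := by
    have singcase : ∀ (g : Set A) (a : A), ({a} : Set A) ⊆ g ∨ g ⊆ {a} ∨ ({a} : Set A) ∩ g = ∅ := by
      intro g a
      by_cases hag : a ∈ g
      · exact Or.inl (by simpa using hag)
      · refine Or.inr (Or.inr ?_)
        ext x
        simp only [Set.mem_inter_iff, Set.mem_singleton_iff, Set.mem_empty_iff_false, iff_false,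
          not_and]
        rintro rfl
        exact hag
    rcases he with (he | ⟨a, rfl⟩) | he
    · simp only [Set.mem_singleton_iff] at he
      subst he
      exact Or.inr (Or.inl (Set.subset_univ f))
    · exact singcase f a
    · rcases hf with (hf | ⟨b, rfl⟩) | hf
      · simp only [Set.mem_singleton_iff] at hf
        subst hf
        exact Or.inl (Set.subset_univ e)
      · rcases singcase e b with h | h | h
        · exact Or.inr (Or.inl h)
        · exact Or.inl h
        · exact Or.inr (Or.inr (by rw [Set.inter_comm]; exact h))
      · simp only [Set.mem_iUnion] at he hf
        obtain ⟨i, hi⟩ := he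
        obtain ⟨j, hj⟩ := hf
        rcases le_total i j with hij | hij
        · have hle : (F.obj j).1 ≤ (F.obj i).1 := leOfHom (F.map (homOfLE hij))
          rcases Setoid.class_subset_or_disjoint hle hj hi with h | h
          · exact Or.inr (Or.inl h)
          · exact Or.inr (Or.inr (by rw [Set.inter_comm]; exact h))
        · have hle : (F.obj i).1 ≤ (F.obj j).1 := leOfHom (F.map (homOfLE hij))
          rcases Setoid.class_subset_or_disjoint hle hi hj with h | h
          · exact Or.inl h
          · exact Or.inr (Or.inr h)

/-- Any tree arising from a chain of nontrivial partitions has an inner edge. -/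
theorem chainTree_exists_inner {n : ℕ} (F : ComposableArrows (PartitionPoset A) n) :
    ∃ e, (chainTree F).IsInnerEdge e := by
  obtain ⟨x, y, hxy, hr⟩ := Setoid.exists_of_ne_bot (F.obj 0).2.1
  refine ⟨{ z | (F.obj 0).1 z y }, ?_, ?_, ?_⟩
  · exact Or.inr (Set.mem_iUnion.2 ⟨0, ⟨y, rfl⟩⟩)
  · intro h
    refine (F.obj 0).2.2 (Setoid.ext fun a b => ?_)
    have ha : (F.obj 0).1 a y := by rw [Set.eq_univ_iff_forall] at h; exact h a
    have hb : (F.obj 0).1 b y := by rw [Set.eq_univ_iff_forall] at h; exact h b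
    simp only [Setoid.top_def]
    constructor
    · intro _; trivial
    · intro _; exact (F.obj 0).1.trans' ha ((F.obj 0).1.symm' hb)
  · intro a h
    have hx : x ∈ ({a} : Set A) := by rw [← h]; exact hr
    have hy : y ∈ ({a} : Set A) := by rw [← h]; exact (F.obj 0).1.refl' y
    simp only [Set.mem_singleton_iff] at hx hy
    exact hxy (hx.trans hy.symm)

end ChainTree
/-- A simplicial subset (subcomplex) of a simplicial set: a family of sets of simplices
closed under the simplicial structure maps. -/
structure SSet.Subcomplex' (X : SSet.{0}) : Type 1 where
  carrier : ∀ n : SimplexCategoryᵒᵖ, Set (X.obj n)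
  map_mem : ∀ {n m : SimplexCategoryᵒᵖ} (f : n ⟶ m) {x : X.obj n},
    x ∈ carrier n → X.map f x ∈ carrier m

/-- The simplicial set underlying a subcomplex. -/
def SSet.Subcomplex'.toSSet {X : SSet.{0}} (S : X.Subcomplex') : SSet.{0} where
  obj n := { x : X.obj n // x ∈ S.carrier n }
  map f := TypeCat.ofHom (fun x => ⟨X.map f x.1, S.map_mem f x.2⟩)
  map_id n := by
    ext x
    simp
  map_comp f g := by
    ext x
    simp

/-- The blocks of the top (last) partition in a chain of partitions. -/
def topBlocks {A : Type} {n : ℕ} (F : ComposableArrows (PartitionPoset A) n) :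
    Set (Set A) :=
  (F.obj (Fin.last n)).blocks

/-- A chain of partitions (i.e. a layered tree) is *elementary* if it has exactly one
non-unary vertex in each layer: passing from each partition in the chain to the next,
exactly one block is subdivided, and the top partition has exactly one non-singleton
block (which is subdivided into leaves). -/
def IsElementary {A : Type} {n : ℕ} (F : ComposableArrows (PartitionPoset A) n) : Prop :=
  (∀ i : Fin n, ∃! b : Set A,
      b ∈ (F.obj i.castSucc).blocks ∧ b ∉ (F.obj i.succ).blocks) ∧
  (∃! b : Set A, b ∈ topBlocks F ∧ ∀ a : A, b ≠ {a})

/-- A simplex of the partition complex is a layering of the tree `T` if applying `φ`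
(forgetting layers) to it yields exactly `T`. -/
def IsLayering {A : Type} {n : ℕ} (F : ComposableArrows (PartitionPoset A) n)
    (T : TreeOn A) : Prop :=
  chainTree F = T

/-- The subcomplex `L(T)` of the partition complex generated by the elementary
layerings of the tree `T`. (For the corolla this is the empty subcomplex.) -/
def layeringSub (A : Type) (T : TreeOn A) : (partitionComplex A).Subcomplex' where
  carrier n := { σ | ∃ (m : SimplexCategory) (τ : (partitionComplex A).obj (op m))
      (g : n.unop ⟶ m), IsElementary τ ∧ IsLayering τ T ∧
      σ = (partitionComplex A).map g.op τ }
  map_mem {n m} f {x} hx := by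
    obtain ⟨m', τ, g, he, hl, rfl⟩ := hx
    refine ⟨m', τ, f.unop ≫ g, he, hl, ?_⟩
    rw [op_comp, (partitionComplex A).map_comp]
    rfl

/-- The subcomplex `Lᵛ(T)` of `L(T)` generated by the elementary layerings of `T`
having the leaf vertex `v` in the top layer. -/
def leafVertexSub (A : Type) (T : TreeOn A) (v : Set A) :
    (partitionComplex A).Subcomplex' where
  carrier n := { σ | ∃ (m : SimplexCategory) (τ : (partitionComplex A).obj (op m))
      (g : n.unop ⟶ m), IsElementary τ ∧ IsLayering τ T ∧ v ∈ topBlocks τ ∧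
      σ = (partitionComplex A).map g.op τ }
  map_mem {n m} f {x} hx := by
    obtain ⟨m', τ, g, he, hl, hv, rfl⟩ := hx
    refine ⟨m', τ, f.unop ≫ g, he, hl, hv, ?_⟩
    rw [op_comp, (partitionComplex A).map_comp]
    rfl

/-! Pad a chain of partitions `P₀ ≥ ⋯ ≥ Pₙ` with `⊤` below and `⊥` above. A vertex of the
tree is a non-singleton block of some partition of the padded chain, hence is split at exactly
one of its `n + 2` steps, and a block is split before every block inside it. For an elementary
layering exactly one block is split at each step, so "the step at which `v` is split" is a
bijection from the vertices onto `Fin (n + 2)` extending the tree order. Conversely a linear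
extension `ρ` gives back the chain: the `k`-th partition has as blocks the maximal edges that
are not vertices of rank `< k`. -/

namespace Setoid

variable {α : Type*}

theorem nonempty_of_mem_classes {r : Setoid α} {c : Set α} (hc : c ∈ r.classes) : c.Nonempty := by
  obtain ⟨y, rfl⟩ := hc
  exact ⟨y, r.refl' y⟩

theorem subset_of_le_of_mem_classes {r s : Setoid α} (h : r ≤ s) {c d : Set α}
    (hc : c ∈ r.classes) (hd : d ∈ s.classes) {a : α} (hac : a ∈ c) (had : a ∈ d) : c ⊆ d := by
  obtain ⟨y, rfl⟩ := hc
  obtain ⟨z, rfl⟩ := hd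
  exact fun x hx => s.trans' (h (r.trans' hx (r.symm' hac))) had

theorem rel_of_mem_classes {r : Setoid α} {c : Set α} (hc : c ∈ r.classes) {a b : α}
    (ha : a ∈ c) (hb : b ∈ c) : r a b := by
  obtain ⟨y, rfl⟩ := hc
  exact r.trans' ha (r.symm' hb)

theorem mem_classes_bot_iff {c : Set α} : c ∈ (⊥ : Setoid α).classes ↔ ∃ a, c = {a} := by
  simp [Setoid.classes, eq_comm]

theorem mem_classes_top_iff [Nonempty α] {c : Set α} :
    c ∈ (⊤ : Setoid α).classes ↔ c = Set.univ := by
  simp [Setoid.classes, Setoid.top_def]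

end Setoid

section SplitsAt

open Setoid

variable {α : Type*} {Q : ℕ → Setoid α} {c d : Set α} {i j k N : ℕ}

def SplitsAt (Q : ℕ → Setoid α) (k : ℕ) (c : Set α) : Prop :=
  c ∈ (Q k).classes ∧ c ∉ (Q (k + 1)).classes

theorem Antitone.mem_classes_of_le_of_le (hQ : Antitone Q) (hi : c ∈ (Q i).classes)
    (hk : c ∈ (Q k).classes) (hij : i ≤ j) (hjk : j ≤ k) : c ∈ (Q j).classes := by
  obtain ⟨a, ha⟩ := nonempty_of_mem_classes hk
  have hd := (Q j).mem_classes a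
  have hja : a ∈ {x | Q j x a} := (Q j).refl' a
  have h₁ := subset_of_le_of_mem_classes (hQ hjk) hk hd ha hja
  have h₂ := subset_of_le_of_mem_classes (hQ hij) hd hi hja ha
  rwa [h₁.antisymm h₂]

theorem SplitsAt.le_of_subset (hQ : Antitone Q) (hc : SplitsAt Q i c) (hd : SplitsAt Q j d)
    (hdc : d ⊆ c) : i ≤ j := by
  by_contra! hji
  obtain ⟨a, ha⟩ := nonempty_of_mem_classes hd.1
  have hd' := (Q (j + 1)).mem_classes a
  have hja : a ∈ {x | Q (j + 1) x a} := (Q (j + 1)).refl' a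
  have h₁ := subset_of_le_of_mem_classes (hQ hji) hc.1 hd' (hdc ha) hja
  have h₂ := subset_of_le_of_mem_classes (hQ j.le_succ) hd' hd.1 hja ha
  exact hd.2 (by rwa [← h₂.antisymm (hdc.trans h₁)])

theorem SplitsAt.eq_of_splitsAt (hQ : Antitone Q) (hi : SplitsAt Q i c) (hj : SplitsAt Q j c) :
    i = j :=
  (hi.le_of_subset hQ hj le_rfl).antisymm (hj.le_of_subset hQ hi le_rfl)

theorem SplitsAt.le_of_mem_classes (hQ : Antitone Q) (hc : SplitsAt Q j c)
    (hk : c ∈ (Q k).classes) : k ≤ j := by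
  by_contra! hjk
  exact hc.2 (hQ.mem_classes_of_le_of_le hc.1 hk j.le_succ hjk)

theorem SplitsAt.ne_singleton (hQ : Antitone Q) (hc : SplitsAt Q k c) (a : α) : c ≠ {a} := by
  rintro rfl
  have hsub := subset_of_le_of_mem_classes (hQ k.le_succ) ((Q (k + 1)).mem_classes a) hc.1
    ((Q (k + 1)).refl' a) rfl
  have hsing : {x | Q (k + 1) x a} = {a} :=
    hsub.antisymm (Set.singleton_subset_iff.2 ((Q (k + 1)).refl' a))
  exact hc.2 (hsing ▸ (Q (k + 1)).mem_classes a)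

theorem exists_splitsAt_lt (hk : c ∈ (Q k).classes) (hN : c ∉ (Q N).classes) (hkN : k ≤ N) :
    ∃ j < N, SplitsAt Q j c := by
  induction N with
  | zero => exact absurd (Nat.le_zero.1 hkN ▸ hk) hN
  | succ N ih =>
    by_cases hc : c ∈ (Q N).classes
    · exact ⟨N, N.lt_succ_self, hc, hN⟩
    · have hkN' : k ≤ N := Nat.le_of_lt_succ (lt_of_le_of_ne hkN (by rintro rfl; exact hN hk))
      obtain ⟨j, hj, hsplit⟩ := ih hc hkN'
      exact ⟨j, hj.trans N.lt_succ_self, hsplit⟩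

structure IsElementarySeq (Q : ℕ → Setoid α) (N : ℕ) : Prop where
  antitone : Antitone Q
  zero_eq_top : Q 0 = ⊤
  eq_bot : ∀ k, N ≤ k → Q k = ⊥
  existsUnique_splitsAt : ∀ k < N, ∃! c, SplitsAt Q k c

theorem IsElementarySeq.ne_bot (h : IsElementarySeq Q N) (hk : k < N) : Q k ≠ ⊥ := by
  intro hbot
  obtain ⟨c, hc, -⟩ := h.existsUnique_splitsAt k hk
  obtain ⟨a, rfl⟩ := mem_classes_bot_iff.1 (hbot ▸ hc.1)
  exact hc.ne_singleton h.antitone a rfl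

theorem IsElementarySeq.ne_top (h : IsElementarySeq Q N) (hN : 0 < N) (hk : 0 < k) : Q k ≠ ⊤ := by
  intro htop
  obtain ⟨c, hc, -⟩ := h.existsUnique_splitsAt 0 hN
  have hQ₁ : Q 1 = ⊤ := eq_top_iff.2 (htop ▸ h.antitone hk)
  exact hc.2 (by rw [hQ₁, ← h.zero_eq_top]; exact hc.1)

end SplitsAt
namespace TreeOn

open Setoid

variable {A : Type} {T : TreeOn A} {O : Set (Set A)}

theorem subset_or_subset_of_mem {e f : Set A} (he : e ∈ T.edges) (hf : f ∈ T.edges) {a : A}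
    (hae : a ∈ e) (haf : a ∈ f) : e ⊆ f ∨ f ⊆ e :=
  (T.laminar e he f hf).imp_right fun h =>
    h.resolve_right fun h' => (Set.eq_empty_iff_forall_notMem.1 h' a) ⟨hae, haf⟩

theorem mem_vertices_of_subset {v f : Set A} (hv : v ∈ T.vertices) (hf : f ∈ T.edges)
    (hvf : v ⊆ f) : f ∈ T.vertices := by
  refine ⟨hf, fun a hfa => ?_⟩
  rcases Set.subset_singleton_iff_eq.1 (hfa ▸ hvf) with h | h
  · exact (T.nonempty_of_mem v hv.1).ne_empty h
  · exact hv.2 a h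

theorem univ_mem_vertices (hT : ∃ e, T.IsInnerEdge e) : Set.univ ∈ T.vertices :=
  let ⟨_, he, _, hsing⟩ := hT
  mem_vertices_of_subset ⟨he, hsing⟩ T.univ_mem (Set.subset_univ _)

theorem two_le_card_vertices [Finite A] (hT : ∃ e, T.IsInnerEdge e) :
    2 ≤ Nat.card T.vertices := by
  obtain ⟨e, he, hne, hsing⟩ := hT
  have : Nontrivial T.vertices :=
    ⟨⟨Set.univ, univ_mem_vertices ⟨e, he, hne, hsing⟩⟩, ⟨e, he, hsing⟩,
      fun h => hne (congrArg Subtype.val h).symm⟩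
  exact Finite.one_lt_card_iff_nontrivial.2 this

theorem notMem_classes_bot {v : Set A} (hv : v ∈ T.vertices) : v ∉ (⊥ : Setoid A).classes :=
  fun h => let ⟨a, ha⟩ := mem_classes_bot_iff.1 h; hv.2 a ha

def cutSetoid (T : TreeOn A) (O : Set (Set A)) : Setoid A where
  r a b := a = b ∨ ∃ e ∈ T.edges, e ∉ O ∧ a ∈ e ∧ b ∈ e
  iseqv := by
    refine ⟨fun a => Or.inl rfl, ?_, ?_⟩
    · rintro a b (rfl | ⟨e, he, heO, ha, hb⟩)
      exacts [Or.inl rfl, Or.inr ⟨e, he, heO, hb, ha⟩]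
    · rintro a b c (rfl | ⟨e, he, heO, ha, hb⟩) (rfl | ⟨f, hf, hfO, hb', hc⟩)
      · exact Or.inl rfl
      · exact Or.inr ⟨f, hf, hfO, hb', hc⟩
      · exact Or.inr ⟨e, he, heO, ha, hb⟩
      · rcases subset_or_subset_of_mem he hf hb hb' with h | h
        · exact Or.inr ⟨f, hf, hfO, h ha, hc⟩
        · exact Or.inr ⟨e, he, heO, ha, h hc⟩

theorem cutSetoid_anti {O O' : Set (Set A)} (h : O ⊆ O') : T.cutSetoid O' ≤ T.cutSetoid O := by
  rintro a b (rfl | ⟨e, he, heO, ha, hb⟩)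
  exacts [Or.inl rfl, Or.inr ⟨e, he, fun h' => heO (h h'), ha, hb⟩]

theorem setOf_cutSetoid_eq {e : Set A} {a : A} (he : e ∈ T.edges) (heO : e ∉ O) (hae : a ∈ e)
    (hmax : ∀ f ∈ T.edges, f ∉ O → a ∈ f → f ⊆ e) : {x | T.cutSetoid O x a} = e := by
  ext x
  refine ⟨?_, fun hx => Or.inr ⟨e, he, heO, hx, hae⟩⟩
  rintro (rfl | ⟨f, hf, hfO, hxf, haf⟩)
  exacts [hae, hmax f hf hfO haf hxf]

section Classes

variable [Finite A]

theorem exists_maximal_edge (hO : ∀ a : A, {a} ∉ O) (a : A) :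
    ∃ e ∈ T.edges, e ∉ O ∧ a ∈ e ∧ ∀ f ∈ T.edges, f ∉ O → a ∈ f → f ⊆ e := by
  obtain ⟨e, ⟨he, heO, hae⟩, hmax⟩ := Set.Finite.exists_maximalFor id
    {e | e ∈ T.edges ∧ e ∉ O ∧ a ∈ e} (Set.toFinite _) ⟨{a}, T.singleton_mem a, hO a, rfl⟩
  refine ⟨e, he, heO, hae, fun f hf hfO haf => ?_⟩
  exact (subset_or_subset_of_mem hf he haf hae).elim id fun h => hmax ⟨hf, hfO, haf⟩ h

theorem mem_classes_cutSetoid_iff (hO : ∀ a : A, {a} ∉ O) {c : Set A} :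
    c ∈ (T.cutSetoid O).classes ↔ c ∈ T.edges ∧ c ∉ O ∧ ∀ f ∈ T.edges, c ⊂ f → f ∈ O := by
  constructor
  · rintro ⟨a, rfl⟩
    obtain ⟨e, he, heO, hae, hmax⟩ := exists_maximal_edge hO a
    rw [setOf_cutSetoid_eq he heO hae hmax]
    refine ⟨he, heO, fun f hf hef => ?_⟩
    by_contra hfO
    exact hef.not_subset (hmax f hf hfO (hef.subset hae))
  · rintro ⟨hc, hcO, hmax⟩
    obtain ⟨a, ha⟩ := T.nonempty_of_mem c hc
    obtain ⟨e, he, heO, hae, hmax'⟩ := exists_maximal_edge hO a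
    have hce : c = e := by
      by_contra hne
      exact heO (hmax e he (Set.ssubset_iff_subset_ne.2 ⟨hmax' c hc hcO ha, hne⟩))
    subst hce
    exact ⟨a, (setOf_cutSetoid_eq hc hcO ha hmax').symm⟩

theorem classes_cutSetoid_subset (hO : ∀ a : A, {a} ∉ O) : (T.cutSetoid O).classes ⊆ T.edges :=
  fun _ hc => ((mem_classes_cutSetoid_iff hO).1 hc).1

end Classes

variable {N : ℕ}

def IsLinearExtension (ρ : T.vertices ≃ Fin N) : Prop :=
  ∀ v w : T.vertices, w.1 ⊆ v.1 → ρ v ≤ ρ w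

-- The partition at stage `k`, once the vertices of rank `< k` have been opened up.
def rankSeq (ρ : T.vertices ≃ Fin N) (k : ℕ) : Setoid A :=
  T.cutSetoid (Subtype.val '' {v | (ρ v : ℕ) < k})

theorem singleton_notMem_image_val (S : Set T.vertices) (a : A) : {a} ∉ Subtype.val '' S :=
  fun ⟨v, _, hv⟩ => v.2.2 a hv

variable {ρ : T.vertices ≃ Fin N}

theorem rankSeq_antitone : Antitone (T.rankSeq ρ) :=
  fun _ _ hkl => cutSetoid_anti (Set.image_mono fun _ hv => lt_of_lt_of_le hv hkl)

theorem rankSeq_zero : T.rankSeq ρ 0 = ⊤ :=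
  Setoid.eq_top_iff.2 fun _ _ =>
    Or.inr ⟨Set.univ, T.univ_mem, fun ⟨_, hv, _⟩ => Nat.not_lt_zero _ hv, trivial, trivial⟩

theorem rankSeq_eq_bot {k : ℕ} (hk : N ≤ k) : T.rankSeq ρ k = ⊥ := by
  refine le_bot_iff.1 fun a b hab => ?_
  rcases hab with rfl | ⟨e, he, heO, ha, hb⟩
  · rfl
  by_cases hv : ∀ x : A, e ≠ {x}
  · exact absurd ⟨⟨e, he, hv⟩, lt_of_lt_of_le (ρ _).2 hk, rfl⟩ heO
  · push Not at hv
    obtain ⟨x, rfl⟩ := hv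
    exact ha.trans hb.symm

theorem exists_eq_of_splitsAt {Q : ℕ → Setoid A} (hQ : Antitone Q)
    (hcl : ∀ k, (Q k).classes ⊆ T.edges) (hρ : ∀ v, SplitsAt Q (ρ v) v.1) {k : ℕ} {c : Set A}
    (hc : SplitsAt Q k c) : ∃ v : T.vertices, v.1 = c ∧ (ρ v : ℕ) = k :=
  ⟨⟨c, hcl k hc.1, hc.ne_singleton hQ⟩, rfl, (hρ _).eq_of_splitsAt hQ hc⟩

theorem exists_equiv_splitsAt {Q : ℕ → Setoid A} (h : IsElementarySeq Q N)
    (hE : T.edges = ⋃ k, (Q k).classes) : ∃ ρ : T.vertices ≃ Fin N, ∀ v, SplitsAt Q (ρ v) v.1 := by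
  have hcl : ∀ k, (Q k).classes ⊆ T.edges := fun k => by
    rw [hE]
    exact Set.subset_iUnion (fun k => (Q k).classes) k
  have htime : ∀ v : T.vertices, ∃ j < N, SplitsAt Q j v.1 := fun v => by
    obtain ⟨k, hk⟩ := Set.mem_iUnion.1 (hE ▸ v.2.1)
    have hkN : k < N := lt_of_not_ge fun hNk => notMem_classes_bot v.2 (h.eq_bot k hNk ▸ hk)
    exact exists_splitsAt_lt hk (h.eq_bot N le_rfl ▸ notMem_classes_bot v.2) hkN.le
  choose t ht hsplit using htime
  let τ : T.vertices → Fin N := fun v => ⟨t v, ht v⟩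
  have hinj : Function.Injective τ := fun v w hvw => Subtype.ext <|
    (h.existsUnique_splitsAt _ (ht v)).unique (hsplit v)
      (by rw [show t v = t w from congrArg Fin.val hvw]; exact hsplit w)
  have hsurj : Function.Surjective τ := fun k => by
    obtain ⟨c, hc, -⟩ := h.existsUnique_splitsAt k k.2
    exact ⟨⟨c, hcl k hc.1, hc.ne_singleton h.antitone⟩,
      Fin.ext ((hsplit _).eq_of_splitsAt h.antitone hc)⟩
  exact ⟨Equiv.ofBijective τ ⟨hinj, hsurj⟩, hsplit⟩

theorem isLinearExtension_of_splitsAt {Q : ℕ → Setoid A} (hQ : Antitone Q)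
    (hρ : ∀ v, SplitsAt Q (ρ v) v.1) : IsLinearExtension ρ :=
  fun v w hwv => (hρ v).le_of_subset hQ (hρ w) hwv

theorem rankSeq_eq_of_splitsAt {Q : ℕ → Setoid A} (hQ : Antitone Q)
    (hcl : ∀ k, (Q k).classes ⊆ T.edges) (hρ : ∀ v, SplitsAt Q (ρ v) v.1) : T.rankSeq ρ = Q := by
  funext k
  ext a b
  constructor
  · rintro (rfl | ⟨e, he, heO, ha, hb⟩)
    · exact (Q k).refl' a
    by_cases hv : ∀ x : A, e ≠ {x}
    · let v : T.vertices := ⟨e, he, hv⟩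
      have hkv : k ≤ ρ v := not_lt.1 fun hlt => heO ⟨v, hlt, rfl⟩
      exact hQ hkv (rel_of_mem_classes (hρ v).1 ha hb)
    · push Not at hv
      obtain ⟨x, rfl⟩ := hv
      exact ha ▸ hb ▸ (Q k).refl' x
  · intro hab
    refine Or.inr ⟨{x | Q k x a}, hcl k ((Q k).mem_classes a), ?_, (Q k).refl' a, (Q k).symm' hab⟩
    rintro ⟨v, hv, hva⟩
    exact (hρ v).le_of_mem_classes hQ (hva ▸ (Q k).mem_classes a) |>.not_gt hv

variable [Finite A]

theorem classes_rankSeq_subset (k : ℕ) : (T.rankSeq ρ k).classes ⊆ T.edges :=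
  classes_cutSetoid_subset (singleton_notMem_image_val _)

theorem splitsAt_rankSeq (hρ : IsLinearExtension ρ) (v : T.vertices) :
    SplitsAt (T.rankSeq ρ) (ρ v) v.1 := by
  simp only [SplitsAt, rankSeq, mem_classes_cutSetoid_iff (singleton_notMem_image_val _)]
  refine ⟨⟨v.2.1, ?_, fun f hf hvf => ?_⟩, fun ⟨_, hvO, _⟩ => hvO ⟨v, Nat.lt_succ_self _, rfl⟩⟩
  · rintro ⟨u, hu, huv⟩
    exact (Subtype.ext huv ▸ hu : (ρ v : ℕ) < ρ v).false
  · let u : T.vertices := ⟨f, mem_vertices_of_subset v.2 hf hvf.subset⟩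
    have hne : ρ u ≠ ρ v := ρ.injective.ne fun h => hvf.ne (congrArg Subtype.val h).symm
    exact ⟨u, lt_of_le_of_ne (hρ u v hvf.subset) hne, rfl⟩

theorem isElementarySeq_rankSeq (hρ : IsLinearExtension ρ) : IsElementarySeq (T.rankSeq ρ) N where
  antitone := rankSeq_antitone
  zero_eq_top := rankSeq_zero
  eq_bot _ := rankSeq_eq_bot
  existsUnique_splitsAt k hk := by
    refine ⟨ρ.symm ⟨k, hk⟩, by simpa using splitsAt_rankSeq hρ (ρ.symm ⟨k, hk⟩), fun c hc => ?_⟩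
    obtain ⟨v, rfl, rfl⟩ :=
      exists_eq_of_splitsAt rankSeq_antitone classes_rankSeq_subset (splitsAt_rankSeq hρ) hc
    simp

theorem iUnion_classes_rankSeq (hρ : IsLinearExtension ρ) :
    ⋃ k, (T.rankSeq ρ k).classes = T.edges := by
  refine Set.Subset.antisymm (Set.iUnion_subset classes_rankSeq_subset) fun e he => ?_
  by_cases hv : ∀ a : A, e ≠ {a}
  · exact Set.mem_iUnion.2 ⟨_, (splitsAt_rankSeq hρ ⟨e, he, hv⟩).1⟩
  · push Not at hv
    obtain ⟨a, rfl⟩ := hv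
    exact Set.mem_iUnion.2 ⟨N, (rankSeq_eq_bot le_rfl).symm ▸ mem_classes_bot_iff.2 ⟨a, rfl⟩⟩

end TreeOn

section PaddedChain

open Setoid

variable {A : Type} {n : ℕ}

theorem PartitionPoset.nontrivial (P : PartitionPoset A) : Nontrivial A :=
  let ⟨x, y, hxy, _⟩ := Setoid.exists_of_ne_bot P.2.1
  ⟨x, y, hxy⟩

-- `F` shifted up by one, between `⊤` and `⊥`: elementarity of `F` then says that exactly one
-- block splits at each step `k < n + 2`.
def paddedChain (F : ComposableArrows (PartitionPoset A) n) : ℕ → Setoid A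
  | 0 => ⊤
  | k + 1 => if hk : k ≤ n then (F.obj ⟨k, Nat.lt_succ_of_le hk⟩).1 else ⊥

variable {F : ComposableArrows (PartitionPoset A) n}

theorem paddedChain_succ (i : Fin (n + 1)) : paddedChain F (i + 1) = (F.obj i).1 := by
  simp [paddedChain, i.is_le]

theorem paddedChain_eq_bot {k : ℕ} (hk : n + 2 ≤ k) : paddedChain F k = ⊥ := by
  obtain ⟨k, rfl⟩ : ∃ j, k = j + 1 := ⟨k - 1, by omega⟩
  simp [paddedChain, show ¬k ≤ n by omega]

theorem paddedChain_succ_eq_bot_iff {k : ℕ} : paddedChain F (k + 1) = ⊥ ↔ n < k := by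
  simp only [paddedChain]
  split_ifs with hk
  · exact iff_of_false (F.obj _).2.1 (by omega)
  · exact iff_of_true rfl (by omega)

theorem paddedChain_antitone : Antitone (paddedChain F) := by
  refine antitone_nat_of_succ_le fun k => ?_
  rcases k with _ | k
  · exact le_top
  by_cases hk : k + 1 ≤ n
  · simp only [paddedChain, dif_pos hk, dif_pos (Nat.le_of_succ_le hk)]
    exact PartitionPoset.le_iff.1 (leOfHom (F.map (homOfLE (Fin.mk_le_mk.2 k.le_succ))))
  · simp only [paddedChain, dif_neg hk]
    exact bot_le

theorem existsUnique_splitsAt_paddedChain_zero : ∃! c, SplitsAt (paddedChain F) 0 c := by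
  have := (F.obj 0).nontrivial
  refine ⟨Set.univ, ⟨mem_classes_top_iff.2 rfl, fun h => ?_⟩,
    fun c hc => mem_classes_top_iff.1 hc.1⟩
  rw [show paddedChain F (0 + 1) = (F.obj 0).1 from paddedChain_succ 0] at h
  exact (F.obj 0).2.2 (Setoid.eq_top_iff.2 fun x y => rel_of_mem_classes h trivial trivial)

theorem isElementary_iff : IsElementary F ↔
    (∀ i : Fin n, ∃! c, SplitsAt (paddedChain F) (i + 1) c) ∧
      ∃! c, SplitsAt (paddedChain F) (n + 1) c := by
  have hcast (i : Fin n) : paddedChain F (i + 1) = (F.obj i.castSucc).1 := by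
    simpa using paddedChain_succ (F := F) i.castSucc
  have hsucc (i : Fin n) : paddedChain F (i + 1 + 1) = (F.obj i.succ).1 := by
    simpa using paddedChain_succ (F := F) i.succ
  have hlast : paddedChain F (n + 1) = (F.obj (Fin.last n)).1 := paddedChain_succ (Fin.last n)
  simp only [IsElementary, SplitsAt, hcast, hsucc, hlast, paddedChain_eq_bot le_rfl,
    mem_classes_bot_iff, topBlocks, PartitionPoset.blocks, not_exists]

theorem IsElementary.isElementarySeq (hE : IsElementary F) :
    IsElementarySeq (paddedChain F) (n + 2) where
  antitone := paddedChain_antitone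
  zero_eq_top := rfl
  eq_bot _ := paddedChain_eq_bot
  existsUnique_splitsAt k hk := by
    rcases k with _ | k
    · exact existsUnique_splitsAt_paddedChain_zero
    rcases (show k < n ∨ k = n by omega) with hkn | rfl
    · exact (isElementary_iff.1 hE).1 ⟨k, hkn⟩
    · exact (isElementary_iff.1 hE).2

theorem isElementary_of_isElementarySeq (h : IsElementarySeq (paddedChain F) (n + 2)) :
    IsElementary F :=
  isElementary_iff.2
    ⟨fun i => h.existsUnique_splitsAt _ (by omega), h.existsUnique_splitsAt _ (by omega)⟩

theorem edges_chainTree : (chainTree F).edges = ⋃ k, (paddedChain F k).classes := by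
  have := (F.obj 0).nontrivial
  ext e
  simp only [chainTree, Set.mem_union, Set.mem_singleton_iff, Set.mem_ofPred_eq, Set.mem_iUnion]
  constructor
  · rintro ((rfl | ⟨a, rfl⟩) | ⟨i, hi⟩)
    · exact ⟨0, mem_classes_top_iff.2 rfl⟩
    · exact ⟨n + 2, (paddedChain_eq_bot le_rfl).symm ▸ mem_classes_bot_iff.2 ⟨a, rfl⟩⟩
    · exact ⟨i + 1, (paddedChain_succ i).symm ▸ hi⟩
  · rintro ⟨_ | k, hk⟩
    · exact Or.inl (Or.inl (mem_classes_top_iff.1 hk))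
    by_cases hkn : k ≤ n
    · refine Or.inr ⟨⟨k, Nat.lt_succ_of_le hkn⟩, ?_⟩
      rwa [show paddedChain F (k + 1) = (F.obj ⟨k, _⟩).1 from
        paddedChain_succ ⟨k, Nat.lt_succ_of_le hkn⟩] at hk
    · rw [paddedChain_eq_bot (by omega), mem_classes_bot_iff] at hk
      exact Or.inl (Or.inr hk)

theorem isLayering_iff {T : TreeOn A} :
    IsLayering F T ↔ T.edges = ⋃ k, (paddedChain F k).classes := by
  rw [IsLayering, ← edges_chainTree]
  exact ⟨fun h => h ▸ rfl, fun h => TreeOn.ext h.symm⟩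

variable {Q : ℕ → Setoid A}

def IsElementarySeq.chain {N : ℕ} (h : IsElementarySeq Q N) (hN : N = n + 2) :
    ComposableArrows (PartitionPoset A) n :=
  Monotone.functor
    (f := fun i : Fin (n + 1) =>
      ⟨Q (i + 1), h.ne_bot (by have := i.isLt; omega), h.ne_top (by omega) (Nat.succ_pos _)⟩)
    fun _ _ hij => PartitionPoset.le_iff.2 (h.antitone (Nat.succ_le_succ hij))

theorem paddedChain_chain {N : ℕ} (h : IsElementarySeq Q N) (hN : N = n + 2) :
    paddedChain (h.chain hN) = Q := by
  funext k
  rcases k with _ | k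
  · exact h.zero_eq_top.symm
  by_cases hk : k ≤ n
  · simp only [paddedChain, dif_pos hk]
    rfl
  · simp only [paddedChain, dif_neg hk]
    exact (h.eq_bot _ (by omega)).symm

theorem sigma_eq_of_paddedChain_eq {m : ℕ} {G : ComposableArrows (PartitionPoset A) m}
    (h : paddedChain F = paddedChain G) :
    (⟨n, F⟩ : Σ n, ComposableArrows (PartitionPoset A) n) = ⟨m, G⟩ := by
  have hlen (k : ℕ) : n < k ↔ m < k := by
    rw [← paddedChain_succ_eq_bot_iff (F := F), ← paddedChain_succ_eq_bot_iff (F := G), h]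
  obtain rfl : n = m := by
    have := hlen n
    have := hlen m
    omega
  refine congrArg _
    (CategoryTheory.Functor.ext (fun i => Subtype.ext ?_) fun _ _ _ => Subsingleton.elim _ _)
  rw [← paddedChain_succ, ← paddedChain_succ, h]

end PaddedChain

section LinearOrders

variable {α : Type*}

abbrev IsLinearOrder.toLinearOrder {r : α → α → Prop} (hr : IsLinearOrder α r) :
    LinearOrder α where
  le := r
  le_refl := refl_of r
  le_trans _ _ _ := trans_of r
  le_antisymm _ _ := antisymm_of r
  le_total := total_of r
  toDecidableLE := Classical.decRel r

def linearOrdersEquivRankings [Finite α] {N : ℕ} (hN : Nat.card α = N) :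
    {r : α → α → Prop // IsLinearOrder α r} ≃ (α ≃ Fin N) :=
  letI := Fintype.ofFinite α
  have hcard : Fintype.card α = N := Nat.card_eq_fintype_card.symm.trans hN
  { toFun r := letI := r.2.toLinearOrder; (monoEquivOfFin α hcard).symm.toEquiv
    invFun ρ := ⟨fun v w => ρ v ≤ ρ w,
      letI := LinearOrder.lift' ρ ρ.injective; inferInstanceAs (IsLinearOrder α (· ≤ ·))⟩
    left_inv r := by
      let _ := r.2.toLinearOrder
      exact Subtype.ext (funext₂ fun v w => propext ((monoEquivOfFin α hcard).symm.le_iff_le))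
    right_inv ρ := by
      let _ := LinearOrder.lift' ρ ρ.injective
      exact congrArg RelIso.toEquiv (Subsingleton.elim _ (⟨ρ, Iff.rfl⟩ : α ≃o Fin N)) }

theorem linearOrdersEquivRankings_le_iff [Finite α] {N : ℕ} (hN : Nat.card α = N)
    (r : {r : α → α → Prop // IsLinearOrder α r}) (v w : α) :
    linearOrdersEquivRankings hN r v ≤ linearOrdersEquivRankings hN r w ↔ r.1 v w := by
  let _ := Fintype.ofFinite α
  let _ := r.2.toLinearOrder
  exact (monoEquivOfFin α (Nat.card_eq_fintype_card.symm.trans hN)).symm.le_iff_le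

end LinearOrders

namespace TreeOn

variable {A : Type} {T : TreeOn A}

theorem card_vertices_of_isLayering {n : ℕ} {F : ComposableArrows (PartitionPoset A) n}
    (hE : IsElementary F) (hL : IsLayering F T) : Nat.card T.vertices = n + 2 := by
  obtain ⟨ρ, -⟩ := exists_equiv_splitsAt hE.isElementarySeq (isLayering_iff.1 hL)
  rw [Nat.card_congr ρ, Nat.card_fin]

variable [Finite A]

variable (T) in
def compatibleLinearOrdersEquiv :
    {r : T.vertices → T.vertices → Prop //
        IsLinearOrder T.vertices r ∧ ∀ v w : T.vertices, w.1 ⊆ v.1 → r v w} ≃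
      {ρ : T.vertices ≃ Fin (Nat.card T.vertices) // T.IsLinearExtension ρ} :=
  (Equiv.subtypeSubtypeEquivSubtypeInter _ _).symm.trans <|
    (linearOrdersEquivRankings rfl).subtypeEquiv fun r =>
      forall₂_congr fun _ _ => imp_congr_right fun _ =>
        (linearOrdersEquivRankings_le_iff rfl r _ _).symm

variable {N : ℕ}

def layeringOfLinearExtension (hN : 2 ≤ N)
    (ρ : {ρ : T.vertices ≃ Fin N // T.IsLinearExtension ρ}) :
    {x : Σ n, ComposableArrows (PartitionPoset A) n // IsElementary x.2 ∧ IsLayering x.2 T} :=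
  ⟨⟨N - 2, (isElementarySeq_rankSeq ρ.2).chain (Nat.sub_add_cancel hN).symm⟩,
    isElementary_of_isElementarySeq
      (by rw [paddedChain_chain, Nat.sub_add_cancel hN]; exact isElementarySeq_rankSeq ρ.2),
    isLayering_iff.2 (by rw [paddedChain_chain, iUnion_classes_rankSeq ρ.2])⟩

theorem paddedChain_layeringOfLinearExtension (hN : 2 ≤ N)
    (ρ : {ρ : T.vertices ≃ Fin N // T.IsLinearExtension ρ}) :
    paddedChain (layeringOfLinearExtension hN ρ).1.2 = T.rankSeq ρ.1 :=
  paddedChain_chain (isElementarySeq_rankSeq ρ.2) (Nat.sub_add_cancel hN).symm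

theorem layeringOfLinearExtension_injective (hN : 2 ≤ N) :
    Function.Injective (layeringOfLinearExtension (T := T) hN) := by
  intro ρ ρ' h
  have hseq : T.rankSeq ρ.1 = T.rankSeq ρ'.1 := by
    rw [← paddedChain_layeringOfLinearExtension hN, ← paddedChain_layeringOfLinearExtension hN, h]
  refine Subtype.ext (Equiv.ext fun v => Fin.ext ?_)
  exact (hseq ▸ splitsAt_rankSeq ρ.2 v).eq_of_splitsAt rankSeq_antitone (splitsAt_rankSeq ρ'.2 v)

theorem layeringOfLinearExtension_surjective (hN : 2 ≤ Nat.card T.vertices) :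
    Function.Surjective (layeringOfLinearExtension (T := T) hN) := by
  rintro ⟨⟨n, F⟩, hE, hL⟩
  have hQ := hE.isElementarySeq
  have hedges := isLayering_iff.1 hL
  have hcl : ∀ k, (paddedChain F k).classes ⊆ T.edges := fun k => by
    rw [hedges]
    exact Set.subset_iUnion (fun k => (paddedChain F k).classes) k
  obtain ⟨ρ, hρ⟩ := exists_equiv_splitsAt hQ hedges
  let ρ' := ρ.trans (finCongr (card_vertices_of_isLayering hE hL).symm)
  have hρ' : ∀ v, SplitsAt (paddedChain F) (ρ' v) v.1 := hρ
  refine ⟨⟨ρ', isLinearExtension_of_splitsAt hQ.antitone hρ'⟩, Subtype.ext ?_⟩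
  exact sigma_eq_of_paddedChain_eq ((paddedChain_layeringOfLinearExtension hN _).trans
    (rankSeq_eq_of_splitsAt hQ.antitone hcl hρ'))

def linearExtensionsEquivLayerings (hN : 2 ≤ Nat.card T.vertices) :
    {ρ : T.vertices ≃ Fin (Nat.card T.vertices) // T.IsLinearExtension ρ} ≃
      {x : Σ n, ComposableArrows (PartitionPoset A) n // IsElementary x.2 ∧ IsLayering x.2 T} :=
  Equiv.ofBijective _
    ⟨layeringOfLinearExtension_injective hN, layeringOfLinearExtension_surjective hN⟩

end TreeOn

/-- The elementary layerings of a tree `T` in `T⁺(A)` are in bijection with the linear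
orderings of the set `V(T)` of vertices of `T` compatible with (i.e. extending) the
partial order on `V(T)` determined by the tree structure (`v ≤ w` iff `w` lies above
`v`, the root being smallest); in particular every elementary layering of `T` is a
simplex of `NP(A)` of dimension `|V(T)| - 2`. -/
theorem elementary_layerings_equiv_linear_orders (A : Type) [Fintype A] (T : TreePlus A) :
    Nonempty
      ({ x : Σ n : ℕ, ComposableArrows (PartitionPoset A) n //
          IsElementary x.2 ∧ IsLayering x.2 T.1 } ≃
        { r : ↥T.1.vertices → ↥T.1.vertices → Prop //
            IsLinearOrder ↥T.1.vertices r ∧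
            ∀ v w : ↥T.1.vertices, w.1 ⊆ v.1 → r v w }) ∧
    ∀ (n : ℕ) (F : ComposableArrows (PartitionPoset A) n),
      IsElementary F → IsLayering F T.1 → n = Nat.card ↥T.1.vertices - 2 := by
  refine ⟨⟨(TreeOn.linearExtensionsEquivLayerings (TreeOn.two_le_card_vertices T.2)).symm.trans
    (TreeOn.compatibleLinearOrdersEquiv T.1).symm⟩, fun n F hE hL => ?_⟩
  rw [TreeOn.card_vertices_of_isLayering hE hL, Nat.add_sub_cancel]

end
end
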